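/- Let A and B be n×n positive definite Hermitian matrices with n ≥ 1. Then trace(A⁻¹·B) ≤ (1/(n−1)!) · ( trace(B⁻¹·A) )^(n−1) · ( det B / det A ). -/

import Mathlib

/-!
Conjugating by `A^{-1/2}` turns the pair `(A, B)` into the single positive definite matrix
`M = A^{-1/2} B A^{-1/2}`, whose eigenvalues `μᵢ > 0` satisfy `tr (A⁻¹B) = Σ μᵢ`,
`tr (B⁻¹A) = Σ μᵢ⁻¹` and `det B / det A = Π μᵢ`. Writing `Σ μᵢ = (Π μ) · e_{n-1}(μ⁻¹)`, the claim
becomes `(n-1)! e_{n-1}(y) ≤ (Σ y)^{n-1}` for `y ≥ 0`, which holds because each `(n-1)`-subset of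
indices contributes `(n-1)!` ordered monomials to the multinomial expansion of `(Σ y)^{n-1}`.
-/

open Finset

namespace Finset

variable {ι : Type*}

theorem sum_prod_erase_eq_sum_powersetCard {R : Type*} [CommSemiring R] [DecidableEq ι]
    {s : Finset ι} (hs : s.Nonempty) (x : ι → R) :
    ∑ i ∈ s, ∏ j ∈ s.erase i, x j = ∑ t ∈ s.powersetCard (#s - 1), ∏ j ∈ t, x j := by
  refine sum_nbij (s.erase ·)
    (fun i hi ↦ mem_powersetCard.mpr ⟨erase_subset i s, card_erase_of_mem hi⟩)
    (fun i _ j hj h ↦ ?_) (fun t ht ↦ ?_) fun _ _ ↦ rfl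
  · by_contra hij
    have : j ∈ s.erase j := (congrArg (j ∈ ·) h).mp (mem_erase.mpr ⟨Ne.symm hij, hj⟩)
    simp at this
  · rw [mem_coe, mem_powersetCard] at ht
    obtain ⟨i, hit, rfl⟩ := exists_eq_insert_iff.mpr ⟨ht.1, by have := hs.card_pos; omega⟩
    exact ⟨i, mem_insert_self i t, erase_insert hit⟩

section OrderedSemiring

variable {R : Type*} [CommSemiring R] [PartialOrder R] [IsOrderedRing R]

theorem factorial_mul_sum_powersetCard_prod_le_sum_pow (s : Finset ι) {x : ι → R}
    (hx : ∀ i ∈ s, 0 ≤ x i) (k : ℕ) :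
    (k.factorial : R) * ∑ t ∈ s.powersetCard k, ∏ i ∈ t, x i ≤ (∑ i ∈ s, x i) ^ k := by
  classical
  set ind : Finset ι → ι → ℕ := fun t i ↦ if i ∈ t then 1 else 0
  have ind_mem : ∀ t ∈ s.powersetCard k, ind t ∈ piAntidiag s k := by
    intro t ht
    rw [mem_powersetCard] at ht
    refine mem_piAntidiag.mpr ⟨?_, fun i hi ↦ ht.1 (by simpa [ind] using hi)⟩
    simp [ind, inter_eq_right.mpr ht.1, ht.2]
  have ind_inj : Set.InjOn ind (s.powersetCard k) := by
    intro t _ u _ h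
    ext i
    have := congr_fun h i
    simp only [ind] at this
    split_ifs at this <;> simp_all
  have multinomial_ind : ∀ t ∈ s.powersetCard k, Nat.multinomial s (ind t) = k.factorial := by
    intro t ht
    have factorials_eq_one : ∏ i ∈ s, (ind t i).factorial = 1 :=
      prod_eq_one fun i _ ↦ by simp only [ind]; split_ifs <;> rfl
    simpa [factorials_eq_one, (mem_piAntidiag.mp (ind_mem t ht)).1] using
      Nat.multinomial_spec s (ind t)
  have prod_ind : ∀ t ∈ s.powersetCard k, ∏ i ∈ s, x i ^ ind t i = ∏ i ∈ t, x i := by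
    intro t ht
    simp only [ind, pow_ite, pow_one, pow_zero, prod_ite_mem,
      inter_eq_right.mpr (mem_powersetCard.mp ht).1]
  rw [sum_pow_eq_sum_piAntidiag, mul_sum]
  calc ∑ t ∈ s.powersetCard k, (k.factorial : R) * ∏ i ∈ t, x i
      = ∑ g ∈ (s.powersetCard k).image ind, (Nat.multinomial s g : R) * ∏ i ∈ s, x i ^ g i := by
        rw [sum_image ind_inj]
        exact sum_congr rfl fun t ht ↦ by rw [multinomial_ind t ht, prod_ind t ht]
    _ ≤ _ := sum_le_sum_of_subset_of_nonneg (image_subset_iff.mpr ind_mem) fun g _ _ ↦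
        mul_nonneg (Nat.cast_nonneg _) (prod_nonneg fun i hi ↦ pow_nonneg (hx i hi) _)

theorem factorial_mul_sum_prod_erase_le_sum_pow [DecidableEq ι] (s : Finset ι) {x : ι → R}
    (hx : ∀ i ∈ s, 0 ≤ x i) :
    ((#s - 1).factorial : R) * ∑ i ∈ s, ∏ j ∈ s.erase i, x j ≤ (∑ i ∈ s, x i) ^ (#s - 1) := by
  rcases s.eq_empty_or_nonempty with rfl | hs
  · simp
  rw [sum_prod_erase_eq_sum_powersetCard hs]
  exact factorial_mul_sum_powersetCard_prod_le_sum_pow s hx _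

end OrderedSemiring

theorem sum_le_inv_factorial_mul_sum_inv_pow_mul_prod {K : Type*} [Field K] [LinearOrder K]
    [IsStrictOrderedRing K] (s : Finset ι) {x : ι → K} (hx : ∀ i ∈ s, 0 < x i) :
    ∑ i ∈ s, x i ≤
      (1 / (#s - 1).factorial : K) * (∑ i ∈ s, (x i)⁻¹) ^ (#s - 1) * ∏ i ∈ s, x i := by
  classical
  have eq_prod_mul_prod_erase_inv : ∀ i ∈ s, x i = (∏ j ∈ s, x j) * ∏ j ∈ s.erase i, (x j)⁻¹ := by
    intro i hi
    rw [← mul_prod_erase s x hi, prod_inv_distrib, mul_assoc, mul_inv_cancel₀]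
    · rw [mul_one]
    · exact (prod_pos fun j hj ↦ hx j (mem_of_mem_erase hj)).ne'
  have esymm_inv_le := factorial_mul_sum_prod_erase_le_sum_pow s fun i hi ↦ (inv_pos.mpr (hx i hi)).le
  have hfac : ((#s - 1).factorial : K) ≠ 0 := by positivity
  calc ∑ i ∈ s, x i = (∏ i ∈ s, x i) * ∑ i ∈ s, ∏ j ∈ s.erase i, (x j)⁻¹ := by
        rw [sum_congr rfl eq_prod_mul_prod_erase_inv, mul_sum]
    _ = (1 / (#s - 1).factorial : K) *
          ((#s - 1).factorial * ∑ i ∈ s, ∏ j ∈ s.erase i, (x j)⁻¹) * ∏ i ∈ s, x i := by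
        field_simp
    _ ≤ _ := by
        gcongr
        exact prod_nonneg fun i hi ↦ (hx i hi).le

end Finset

open scoped ComplexOrder MatrixOrder

namespace Matrix

variable {n 𝕜 : Type*} [Fintype n] [DecidableEq n] [RCLike 𝕜]

theorem PosDef.trace_inv {M : Matrix n n 𝕜} (hM : M.PosDef) :
    M⁻¹.trace = ((∑ i, (hM.1.eigenvalues i)⁻¹ : ℝ) : 𝕜) := by
  have inv_eq_cfc : M⁻¹ = cfc (·⁻¹ : ℝ → ℝ) M := by
    obtain ⟨u, rfl⟩ := hM.isUnit
    rw [cfc_inv_id u, nonsing_inv_eq_ringInverse, Ring.inverse_unit]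
  rw [inv_eq_cfc, hM.1.cfc_eq, IsHermitian.cfc, Unitary.conjStarAlgAut_apply, trace_mul_cycle,
    Unitary.coe_star_mul_self, one_mul, trace_diagonal]
  simp

theorem PosDef.exists_relative_eigenvalues {A B : Matrix n n 𝕜} (hA : A.PosDef) (hB : B.PosDef) :
    ∃ μ : n → ℝ, (∀ i, 0 < μ i) ∧ (A⁻¹ * B).trace = ((∑ i, μ i : ℝ) : 𝕜) ∧
      (B⁻¹ * A).trace = ((∑ i, (μ i)⁻¹ : ℝ) : 𝕜) ∧ B.det = A.det * ((∏ i, μ i : ℝ) : 𝕜) := by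
  have hAdet : IsUnit A.det := (isUnit_iff_isUnit_det A).mp hA.isUnit
  set R := CFC.sqrt A⁻¹
  have hR : R * R = A⁻¹ := CFC.sqrt_mul_sqrt_self A⁻¹ hA.inv.posSemidef.nonneg
  have hRH : Rᴴ = R := (nonneg_iff_posSemidef.mp (CFC.sqrt_nonneg A⁻¹)).isHermitian
  have hRunit : IsUnit R := (CFC.isUnit_sqrt_iff A⁻¹ hA.inv.posSemidef.nonneg).mpr hA.inv.isUnit
  have hM : (R * B * R).PosDef := by
    simpa only [hRH] using hB.conjTranspose_mul_mul_same (mulVec_injective_iff_isUnit.mpr hRunit)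
  refine ⟨hM.1.eigenvalues, hM.eigenvalues_pos, ?_, ?_, ?_⟩
  · rw [RCLike.ofReal_sum, ← hM.1.trace_eq_sum_eigenvalues, ← hR]
    exact (trace_mul_cycle R B R).symm
  · rw [← hM.trace_inv, mul_inv_rev, mul_inv_rev, trace_mul_comm R⁻¹, mul_assoc, ← mul_inv_rev, hR,
      nonsing_inv_nonsing_inv A hAdet]
  · rw [RCLike.ofReal_prod, ← hM.1.det_eq_prod_eigenvalues, det_mul, det_mul, mul_right_comm R.det,
      ← det_mul, hR, ← mul_assoc, mul_comm A.det, det_nonsing_inv_mul_det A hAdet, one_mul]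

end Matrix

theorem stmt_8_general (n : ℕ) (A B : Matrix (Fin n) (Fin n) ℂ)
    (hA : A.PosDef) (hB : B.PosDef) :
    ((A⁻¹ * B).trace).re ≤
      (1 / (n - 1).factorial : ℝ) * (((B⁻¹ * A).trace).re) ^ (n - 1) *
        (B.det.re / A.det.re) := by
  obtain ⟨μ, hμ, htr, htr', hdet⟩ := hA.exists_relative_eigenvalues hB
  have hdetA : 0 < A.det.re := (Complex.pos_iff.mp hA.det_pos).1
  have hdetB : B.det.re = A.det.re * ∏ i, μ i := by
    rw [hdet]
    exact RCLike.re_mul_ofReal (K := ℂ) _ _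
  rw [htr, htr', hdetB, mul_div_cancel_left₀ _ hdetA.ne']
  simpa using sum_le_inv_factorial_mul_sum_inv_pow_mul_prod univ fun i _ ↦ hμ i

theorem stmt_8 (n : ℕ) (hn : 1 ≤ n) (A B : Matrix (Fin n) (Fin n) ℂ)
    (hA : A.PosDef) (hB : B.PosDef) :
    ((A⁻¹ * B).trace).re ≤
      (1 / (n - 1).factorial : ℝ) * (((B⁻¹ * A).trace).re) ^ (n - 1) *
        (B.det.re / A.det.re) :=
  stmt_8_general n A B hA hB
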